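/- arXiv:0802.2344 — 2 statements merged into one kernel-verified Lean document; each statement's English description precedes it below -/
import Mathlib

section
/- Let J ⊆ ℝ be an open interval, Y : J → ℝ smooth, I ⊆ ℝ an open interval, and U = I × J with Y(y) + x ≠ 0 for all (x,y) ∈ U. Suppose smooth functions a,b,c on U satisfy the system (53): ∂_y a = 0; (Y+x)·∂_x a + (Y+x)·∂_y b + 2a + Y′·b = 0; (Y+x)·∂_x b + (Y+x)·∂_y c + b + 2Y′·c = 0; ∂_x c = 0. Then, regarding a as a smooth function of x alone and c as a smooth function of y alone, the compatibility identity −a″(x)·x + c″(y)·x + c″(y)·Y(y) − 3a′(x) + 3c′(y)·Y′(y) − a″(x)·Y(y) + 2Y″(y)·c(y) = 0 holds at every point of U. If moreover Y′ vanishes at no point of J, then a⁗(x) = 0 for all x ∈ I, i.e. a is a polynomial of degree at most 3. -/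
/-!
Differentiating the second equation of (53) in `x` and the third in `y` and subtracting
eliminates `b` (its mixed partials agree), which gives the compatibility identity
`(c'' - a'')(Y + x) + 3Y'c' + 2Y''c = 3a'`. As `a` depends on `x` only and `c` on `y` only,
differentiating this identity in `x`, then `y`, then `x` leaves only `Y'(y) a''''(x) = 0`.
-/

noncomputable section

/-- The partial derivative of `f : ℝ² → ℝ` in the `i`-th coordinate direction
(`0 ↦ x`, `1 ↦ y`). -/
def pd (i : Fin 2) (f : ℝ × ℝ → ℝ) (p : ℝ × ℝ) : ℝ :=
  fderiv ℝ f p (if i = 0 then ((1 : ℝ), (0 : ℝ)) else ((0 : ℝ), (1 : ℝ)))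

open Topology
open scoped ContDiff

section PartialDerivative

variable {U : Set (ℝ × ℝ)} {f g : ℝ × ℝ → ℝ} {p : ℝ × ℝ}

theorem ContDiffOn.pd (hf : ContDiffOn ℝ ∞ f U) (hU : IsOpen U) (i : Fin 2) :
    ContDiffOn ℝ ∞ (pd i f) U :=
  (hf.fderiv_of_isOpen hU (by simp)).clm_apply contDiffOn_const

theorem pd_comm (hf : ContDiffAt ℝ 2 f p) (i j : Fin 2) : pd i (pd j f) p = pd j (pd i f) p := by
  have hdf : DifferentiableAt ℝ (fderiv ℝ f) p :=
    (hf.fderiv_right (m := 1) (by norm_num)).differentiableAt one_ne_zero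
  have hsymm : IsSymmSndFDerivAt ℝ f p :=
    hf.isSymmSndFDerivAt (by simp [minSmoothness_of_isRCLikeNormedField])
  have hpd : ∀ v w : ℝ × ℝ,
      fderiv ℝ (fun q => fderiv ℝ f q w) p v = fderiv ℝ (fderiv ℝ f) p v w := fun v w => by
    simp [fderiv_clm_apply hdf (differentiableAt_const w)]
  unfold pd
  rw [hpd, hpd, hsymm]

theorem pd_const (k : ℝ) (i : Fin 2) : pd i (fun _ => k) p = 0 := by
  simp [pd]

theorem pd_eq_of_eqOn (hU : IsOpen U) (h : Set.EqOn f g U) (hp : p ∈ U) (i : Fin 2) :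
    pd i f p = pd i g p := by
  rw [pd, pd, (h.eventuallyEq_of_mem (hU.mem_nhds hp)).fderiv_eq]

theorem pd_pd_eq_zero_of_pd_eq_zero {i : Fin 2} (hU : IsOpen U) (hf : ContDiffOn ℝ ∞ f U)
    (h : ∀ q ∈ U, pd i f q = 0) (j : Fin 2) : ∀ q ∈ U, pd i (pd j f) q = 0 := fun q hq => by
  rw [pd_comm ((hf.contDiffAt (hU.mem_nhds hq)).of_le ENat.LEInfty.out)]
  simpa [pd_const] using pd_eq_of_eqOn hU h hq j

theorem pd_fun_add (hf : DifferentiableAt ℝ f p) (hg : DifferentiableAt ℝ g p) (i : Fin 2) :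
    pd i (fun q => f q + g q) p = pd i f p + pd i g p := by
  simp [pd, fderiv_fun_add hf hg]

theorem pd_fun_sub (hf : DifferentiableAt ℝ f p) (hg : DifferentiableAt ℝ g p) (i : Fin 2) :
    pd i (fun q => f q - g q) p = pd i f p - pd i g p := by
  simp [pd, fderiv_fun_sub hf hg]

theorem pd_fun_mul (hf : DifferentiableAt ℝ f p) (hg : DifferentiableAt ℝ g p) (i : Fin 2) :
    pd i (fun q => f q * g q) p = f p * pd i g p + g p * pd i f p := by
  simp [pd, fderiv_fun_mul hf hg]

theorem pd_zero_fst : pd 0 (fun q => q.1) p = 1 := by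
  simp [pd, fderiv_fst]

theorem pd_one_fst : pd 1 (fun q => q.1) p = 0 := by
  simp [pd, fderiv_fst]

theorem pd_zero_comp_snd {Y : ℝ → ℝ} (hY : DifferentiableAt ℝ Y p.2) :
    pd 0 (fun q => Y q.2) p = 0 := by
  simp [pd, fderiv_fun_comp p hY differentiableAt_snd, fderiv_snd]

theorem pd_one_comp_snd {Y : ℝ → ℝ} (hY : DifferentiableAt ℝ Y p.2) :
    pd 1 (fun q => Y q.2) p = deriv Y p.2 := by
  simp [pd, fderiv_fun_comp p hY differentiableAt_snd, fderiv_snd]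

end PartialDerivative

section QuadraticIntegral

variable {U : Set (ℝ × ℝ)} {Y : ℝ → ℝ} {a b c : ℝ × ℝ → ℝ}

theorem compatibility_identity (hU : IsOpen U) (hY : ∀ q ∈ U, ContDiffAt ℝ ∞ Y q.2)
    (ha : ContDiffOn ℝ ∞ a U) (hb : ContDiffOn ℝ ∞ b U) (hc : ContDiffOn ℝ ∞ c U)
    (h₂ : ∀ q ∈ U, (Y q.2 + q.1) * pd 0 a q + (Y q.2 + q.1) * pd 1 b q
        + 2 * a q + deriv Y q.2 * b q = 0)
    (h₃ : ∀ q ∈ U, (Y q.2 + q.1) * pd 0 b q + (Y q.2 + q.1) * pd 1 c q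
        + b q + 2 * deriv Y q.2 * c q = 0) (p : ℝ × ℝ) (hp : p ∈ U) :
    (pd 1 (pd 1 c) p - pd 0 (pd 0 a) p) * (Y p.2 + p.1) + 3 * deriv Y p.2 * pd 1 c p
      + 2 * deriv (deriv Y) p.2 * c p = 3 * pd 0 a p := by
  have hpU : U ∈ 𝓝 p := hU.mem_nhds hp
  have dY := (hY p hp).differentiableAt (by simp)
  have dY' := ((hY p hp).derivWithin (m := ∞) (by simp)).differentiableAt (by simp)
  have da := (ha.contDiffAt hpU).differentiableAt (by simp)
  have db := (hb.contDiffAt hpU).differentiableAt (by simp)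
  have dc := (hc.contDiffAt hpU).differentiableAt (by simp)
  have da₀ := ((ha.pd hU 0).contDiffAt hpU).differentiableAt (by simp)
  have db₀ := ((hb.pd hU 0).contDiffAt hpU).differentiableAt (by simp)
  have db₁ := ((hb.pd hU 1).contDiffAt hpU).differentiableAt (by simp)
  have dc₁ := ((hc.pd hU 1).contDiffAt hpU).differentiableAt (by simp)
  have e₂ := pd_eq_of_eqOn hU h₂ hp 0
  have e₃ := pd_eq_of_eqOn hU h₃ hp 1
  simp (disch := fun_prop) only [pd_fun_add, pd_fun_mul, pd_const, pd_zero_fst, pd_one_fst,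
    pd_zero_comp_snd, pd_one_comp_snd] at e₂ e₃
  rw [pd_comm ((hb.contDiffAt hpU).of_le ENat.LEInfty.out)] at e₂
  linear_combination e₃ - e₂

theorem compatibility_pd_zero (hU : IsOpen U) (hY : ∀ q ∈ U, ContDiffAt ℝ ∞ Y q.2)
    (ha : ContDiffOn ℝ ∞ a U) (hc : ContDiffOn ℝ ∞ c U) (hc₀ : ∀ q ∈ U, pd 0 c q = 0)
    (hcomp : ∀ q ∈ U, (pd 1 (pd 1 c) q - pd 0 (pd 0 a) q) * (Y q.2 + q.1)
      + 3 * deriv Y q.2 * pd 1 c q + 2 * deriv (deriv Y) q.2 * c q = 3 * pd 0 a q)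
    (p : ℝ × ℝ) (hp : p ∈ U) :
    pd 1 (pd 1 c) p = 4 * pd 0 (pd 0 a) p + (Y p.2 + p.1) * pd 0 (pd 0 (pd 0 a)) p := by
  have hpU : U ∈ 𝓝 p := hU.mem_nhds hp
  have hY' := (hY p hp).derivWithin (m := ∞) (by simp)
  have dY := (hY p hp).differentiableAt (by simp)
  have dY' := hY'.differentiableAt (by simp)
  have dY'' := (hY'.derivWithin (m := ∞) (by simp)).differentiableAt (by simp)
  have dc := (hc.contDiffAt hpU).differentiableAt (by simp)
  have da₀ := ((ha.pd hU 0).contDiffAt hpU).differentiableAt (by simp)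
  have da₀₀ := (((ha.pd hU 0).pd hU 0).contDiffAt hpU).differentiableAt (by simp)
  have dc₁ := ((hc.pd hU 1).contDiffAt hpU).differentiableAt (by simp)
  have dc₁₁ := (((hc.pd hU 1).pd hU 1).contDiffAt hpU).differentiableAt (by simp)
  have hc₁₀ := pd_pd_eq_zero_of_pd_eq_zero hU hc hc₀ 1
  have hc₁₁₀ := pd_pd_eq_zero_of_pd_eq_zero hU (hc.pd hU 1) hc₁₀ 1
  have e := pd_eq_of_eqOn hU hcomp hp 0
  simp (disch := fun_prop) only [pd_fun_add, pd_fun_sub, pd_fun_mul, pd_const, pd_zero_fst,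
    pd_zero_comp_snd, hc₀ p hp, hc₁₀ p hp, hc₁₁₀ p hp] at e
  linear_combination e

theorem compatibility_pd_zero_pd_one (hU : IsOpen U) (hY : ∀ q ∈ U, ContDiffAt ℝ ∞ Y q.2)
    (ha : ContDiffOn ℝ ∞ a U) (ha₁ : ∀ q ∈ U, pd 1 a q = 0)
    (h : ∀ q ∈ U,
      pd 1 (pd 1 c) q = 4 * pd 0 (pd 0 a) q + (Y q.2 + q.1) * pd 0 (pd 0 (pd 0 a)) q)
    (p : ℝ × ℝ) (hp : p ∈ U) :
    pd 1 (pd 1 (pd 1 c)) p = deriv Y p.2 * pd 0 (pd 0 (pd 0 a)) p := by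
  have hpU : U ∈ 𝓝 p := hU.mem_nhds hp
  have dY := (hY p hp).differentiableAt (by simp)
  have ha₀ := ha.pd hU 0
  have ha₀₀ := ha₀.pd hU 0
  have da₀₀ := (ha₀₀.contDiffAt hpU).differentiableAt (by simp)
  have da₀₀₀ := ((ha₀₀.pd hU 0).contDiffAt hpU).differentiableAt (by simp)
  have ha₀₁ := pd_pd_eq_zero_of_pd_eq_zero hU ha ha₁ 0
  have ha₀₀₁ := pd_pd_eq_zero_of_pd_eq_zero hU ha₀ ha₀₁ 0
  have ha₀₀₀₁ := pd_pd_eq_zero_of_pd_eq_zero hU ha₀₀ ha₀₀₁ 0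
  have e := pd_eq_of_eqOn hU h hp 1
  simp (disch := fun_prop) only [pd_fun_add, pd_fun_mul, pd_const, pd_one_fst,
    pd_one_comp_snd, ha₀₀₁ p hp, ha₀₀₀₁ p hp] at e
  linear_combination e

theorem compatibility_pd_zero_pd_one_pd_zero (hU : IsOpen U)
    (hY : ∀ q ∈ U, ContDiffAt ℝ ∞ Y q.2) (ha : ContDiffOn ℝ ∞ a U) (hc : ContDiffOn ℝ ∞ c U)
    (hc₀ : ∀ q ∈ U, pd 0 c q = 0)
    (h : ∀ q ∈ U, pd 1 (pd 1 (pd 1 c)) q = deriv Y q.2 * pd 0 (pd 0 (pd 0 a)) q)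
    (p : ℝ × ℝ) (hp : p ∈ U) :
    deriv Y p.2 * pd 0 (pd 0 (pd 0 (pd 0 a))) p = 0 := by
  have hpU : U ∈ 𝓝 p := hU.mem_nhds hp
  have dY' := ((hY p hp).derivWithin (m := ∞) (by simp)).differentiableAt (by simp)
  have ha₀₀₀ := ((ha.pd hU 0).pd hU 0).pd hU 0
  have da₀₀₀ := (ha₀₀₀.contDiffAt hpU).differentiableAt (by simp)
  have hc₁ := hc.pd hU 1
  have hc₁₀ := pd_pd_eq_zero_of_pd_eq_zero hU hc hc₀ 1
  have hc₁₁₀ := pd_pd_eq_zero_of_pd_eq_zero hU hc₁ hc₁₀ 1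
  have hc₁₁₁₀ := pd_pd_eq_zero_of_pd_eq_zero hU (hc₁.pd hU 1) hc₁₁₀ 1
  have e := pd_eq_of_eqOn hU h hp 0
  simp (disch := fun_prop) only [pd_fun_mul, pd_zero_comp_snd, hc₁₁₁₀ p hp] at e
  linear_combination -e

end QuadraticIntegral

theorem stmt11_general
    (I J : Set ℝ) (hIopen : IsOpen I)
    (hJopen : IsOpen J)
    (Y : ℝ → ℝ) (hY : ContDiffOn ℝ (⊤ : ℕ∞) Y J)
    (a b c : ℝ × ℝ → ℝ)
    (ha : ContDiffOn ℝ (⊤ : ℕ∞) a (I ×ˢ J)) (hb : ContDiffOn ℝ (⊤ : ℕ∞) b (I ×ˢ J))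
    (hc : ContDiffOn ℝ (⊤ : ℕ∞) c (I ×ˢ J))
    (hsys : ∀ p ∈ I ×ˢ J,
      pd 1 a p = 0 ∧
      (Y p.2 + p.1) * pd 0 a p + (Y p.2 + p.1) * pd 1 b p
        + 2 * a p + deriv Y p.2 * b p = 0 ∧
      (Y p.2 + p.1) * pd 0 b p + (Y p.2 + p.1) * pd 1 c p
        + b p + 2 * deriv Y p.2 * c p = 0 ∧
      pd 0 c p = 0) :
    (∀ p ∈ I ×ˢ J,
      - pd 0 (pd 0 a) p * p.1 + pd 1 (pd 1 c) p * p.1 + pd 1 (pd 1 c) p * Y p.2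
        - 3 * pd 0 a p + 3 * pd 1 c p * deriv Y p.2 - pd 0 (pd 0 a) p * Y p.2
        + 2 * deriv (deriv Y) p.2 * c p = 0) ∧
    ((∀ y ∈ J, deriv Y y ≠ 0) →
      ∀ p ∈ I ×ˢ J, pd 0 (pd 0 (pd 0 (pd 0 a))) p = 0) := by
  have hU : IsOpen (I ×ˢ J) := hIopen.prod hJopen
  have hYU : ∀ q ∈ I ×ˢ J, ContDiffAt ℝ ∞ Y q.2 := fun q hq =>
    hY.contDiffAt (hJopen.mem_nhds hq.2)
  have hcomp := compatibility_identity hU hYU ha hb hc (fun q hq => (hsys q hq).2.1)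
    (fun q hq => (hsys q hq).2.2.1)
  refine ⟨fun p hp => by linear_combination hcomp p hp, fun hY' p hp => ?_⟩
  have ha₁ : ∀ q ∈ I ×ˢ J, pd 1 a q = 0 := fun q hq => (hsys q hq).1
  have hc₀ : ∀ q ∈ I ×ˢ J, pd 0 c q = 0 := fun q hq => (hsys q hq).2.2.2
  have h := compatibility_pd_zero_pd_one_pd_zero hU hYU ha hc hc₀
    (compatibility_pd_zero_pd_one hU hYU ha ha₁ (compatibility_pd_zero hU hYU ha hc hc₀ hcomp))
    p hp
  exact (mul_eq_zero.1 h).resolve_left (hY' p.2 hp.2)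

/-- For the metric `ds² = 2(Y(y)+x)dxdy`, the system (53) for a quadratic
integral `F = a p₁² + b p₁p₂ + c p₂²` implies the compatibility identity (54); if moreover
`Y′` vanishes nowhere, then `a'''' = 0`. -/
theorem stmt11
    (I J : Set ℝ) (hIopen : IsOpen I) (hIint : I.OrdConnected)
    (hJopen : IsOpen J) (hJint : J.OrdConnected)
    (Y : ℝ → ℝ) (hY : ContDiffOn ℝ (⊤ : ℕ∞) Y J)
    (hne : ∀ p ∈ I ×ˢ J, Y p.2 + p.1 ≠ 0)
    (a b c : ℝ × ℝ → ℝ)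
    (ha : ContDiffOn ℝ (⊤ : ℕ∞) a (I ×ˢ J)) (hb : ContDiffOn ℝ (⊤ : ℕ∞) b (I ×ˢ J))
    (hc : ContDiffOn ℝ (⊤ : ℕ∞) c (I ×ˢ J))
    (hsys : ∀ p ∈ I ×ˢ J,
      pd 1 a p = 0 ∧
      (Y p.2 + p.1) * pd 0 a p + (Y p.2 + p.1) * pd 1 b p
        + 2 * a p + deriv Y p.2 * b p = 0 ∧
      (Y p.2 + p.1) * pd 0 b p + (Y p.2 + p.1) * pd 1 c p
        + b p + 2 * deriv Y p.2 * c p = 0 ∧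
      pd 0 c p = 0) :
    (∀ p ∈ I ×ˢ J,
      - pd 0 (pd 0 a) p * p.1 + pd 1 (pd 1 c) p * p.1 + pd 1 (pd 1 c) p * Y p.2
        - 3 * pd 0 a p + 3 * pd 1 c p * deriv Y p.2 - pd 0 (pd 0 a) p * Y p.2
        + 2 * deriv (deriv Y) p.2 * c p = 0) ∧
    ((∀ y ∈ J, deriv Y y ≠ 0) →
      ∀ p ∈ I ×ˢ J, pd 0 (pd 0 (pd 0 (pd 0 a))) p = 0) :=
  stmt11_general I J hIopen hJopen Y hY a b c ha hb hc hsys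
end
end

section
/- Let I₁, I₂ ⊆ ℝ be open intervals, let X, X₁ : I₁ → ℝ and Y, Y₁ : I₂ → ℝ be smooth and nowhere zero, and assume X(x) ≠ Y(y) for all (x,y) ∈ U := I₁ × I₂. Then the two metrics on U given by g: E = (X−Y)·X₁, F = 0, G = (X−Y)·Y₁ (i.e. ds²_g = (X−Y)(X₁ dx² + Y₁ dy²)) and ḡ: Ē = (1/X − 1/Y)·X₁/X, F̄ = 0, Ḡ = (1/X − 1/Y)·Y₁/Y (i.e. ds²_{ḡ} = (1/X − 1/Y)(X₁/X dx² + Y₁/Y dy²)) have identical projective connection coefficients: K_i(g) = K_i(ḡ) on U for i = 0,1,2,3. Hence g and ḡ are projectively equivalent (have the same unparameterized geodesics). -/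
noncomputable section

/-- The components of the metric `g = E dx² + 2F dx dy + G dy²`. -/
def gc (E F G : ℝ × ℝ → ℝ) (i j : Fin 2) : ℝ × ℝ → ℝ := fun p =>
  if i = 0 then (if j = 0 then E p else F p) else (if j = 0 then F p else G p)

/-- The components of the inverse metric. -/
def gInv (E F G : ℝ × ℝ → ℝ) (i j : Fin 2) : ℝ × ℝ → ℝ := fun p =>
  (if i = 0 then (if j = 0 then G p else -F p) else (if j = 0 then -F p else E p)) /
    (E p * G p - F p ^ 2)

/-- The Christoffel symbols `Γ^i_{jk}` of the metric `(E,F,G)`. -/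
def Chr (E F G : ℝ × ℝ → ℝ) (i j k : Fin 2) : ℝ × ℝ → ℝ := fun p =>
  (1 / 2) * ∑ m : Fin 2, gInv E F G i m p *
    (pd j (gc E F G m k) p + pd k (gc E F G m j) p - pd m (gc E F G j k) p)

/-- The projective connection coefficient `K₀ = -Γ²₁₁`. -/
def pK0 (E F G : ℝ × ℝ → ℝ) : ℝ × ℝ → ℝ := fun p => - Chr E F G 1 0 0 p
/-- The projective connection coefficient `K₁ = Γ¹₁₁ - 2Γ²₁₂`. -/
def pK1 (E F G : ℝ × ℝ → ℝ) : ℝ × ℝ → ℝ := fun p => Chr E F G 0 0 0 p - 2 * Chr E F G 1 0 1 p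
/-- The projective connection coefficient `K₂ = -Γ²₂₂ + 2Γ¹₁₂`. -/
def pK2 (E F G : ℝ × ℝ → ℝ) : ℝ × ℝ → ℝ := fun p => - Chr E F G 1 1 1 p + 2 * Chr E F G 0 0 1 p
/-- The projective connection coefficient `K₃ = Γ¹₂₂`. -/
def pK3 (E F G : ℝ × ℝ → ℝ) : ℝ × ℝ → ℝ := fun p => Chr E F G 0 1 1 p

/-- The linear system (12). -/
def Sys12 (K₀ K₁ K₂ K₃ a11 a12 a22 : ℝ × ℝ → ℝ) (U : Set (ℝ × ℝ)) : Prop :=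
  ∀ p ∈ U,
    pd 0 a11 p - (2/3) * K₁ p * a11 p + 2 * K₀ p * a12 p = 0 ∧
    pd 1 a11 p + 2 * pd 0 a12 p - (4/3) * K₂ p * a11 p + (2/3) * K₁ p * a12 p
      + 2 * K₀ p * a22 p = 0 ∧
    2 * pd 1 a12 p + pd 0 a22 p - 2 * K₃ p * a11 p - (2/3) * K₂ p * a12 p
      + (4/3) * K₁ p * a22 p = 0 ∧
    pd 1 a22 p - 2 * K₃ p * a12 p + (2/3) * K₂ p * a22 p = 0

/-- The components of a vector field `v = (v¹, v²)`. -/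
def vc (v1 v2 : ℝ × ℝ → ℝ) (m : Fin 2) : ℝ × ℝ → ℝ := fun p => if m = 0 then v1 p else v2 p

/-- `v = (v1, v2)` is a Killing vector field for the metric `(E,F,G)` on `U`. -/
def IsKilling (E F G v1 v2 : ℝ × ℝ → ℝ) (U : Set (ℝ × ℝ)) : Prop :=
  ∀ p ∈ U, ∀ i j : Fin 2,
    (∑ m : Fin 2, (vc v1 v2 m p * pd m (gc E F G i j) p
      + gc E F G m j p * pd i (vc v1 v2 m) p
      + gc E F G i m p * pd j (vc v1 v2 m) p)) = 0

/-! Both metrics are Liouville metrics `(A(x) - B(y)) (C(x) dx² + D(y) dy²)`: `g` with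
`(A, B, C, D) = (X, Y, X₁, Y₁)` and `ḡ` with `(A, B, C, D) = (1/X, 1/Y, X₁/X, Y₁/Y)`.
For a Liouville metric the projective connection coefficients are explicit rational expressions
in `A, B, C, D` and their first derivatives, and substituting the two parameter sets gives the
same four expressions. -/

lemma pd_zero_of_hasFDerivAt {f : ℝ × ℝ → ℝ} {L : ℝ × ℝ →L[ℝ] ℝ} {p : ℝ × ℝ}
    (h : HasFDerivAt f L p) : pd 0 f p = L (1, 0) := by
  simp [pd, h.fderiv]

lemma pd_one_of_hasFDerivAt {f : ℝ × ℝ → ℝ} {L : ℝ × ℝ →L[ℝ] ℝ} {p : ℝ × ℝ}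
    (h : HasFDerivAt f L p) : pd 1 f p = L (0, 1) := by
  simp [pd, h.fderiv]

@[simp]
lemma pd_const_zero (i : Fin 2) (p : ℝ × ℝ) : pd i (fun _ => 0) p = 0 := by
  simp [pd]

@[simp]
lemma gc_zero_zero (E F G : ℝ × ℝ → ℝ) : gc E F G 0 0 = E := rfl

@[simp]
lemma gc_zero_one (E F G : ℝ × ℝ → ℝ) : gc E F G 0 1 = F := rfl

@[simp]
lemma gc_one_zero (E F G : ℝ × ℝ → ℝ) : gc E F G 1 0 = F := rfl

@[simp]
lemma gc_one_one (E F G : ℝ × ℝ → ℝ) : gc E F G 1 1 = G := rfl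

section Diagonal

variable {E G : ℝ × ℝ → ℝ} {p : ℝ × ℝ}

lemma gInv_diagonal (i j : Fin 2) (hE : E p ≠ 0) (hG : G p ≠ 0) :
    gInv E (fun _ => 0) G i j p =
      if i = 0 then (if j = 0 then 1 / E p else 0) else (if j = 0 then 0 else 1 / G p) := by
  fin_cases i <;> fin_cases j <;> simp [gInv] <;> field_simp

lemma pK0_diagonal (hE : E p ≠ 0) (hG : G p ≠ 0) :
    pK0 E (fun _ => 0) G p = pd 1 E p / (2 * G p) := by
  simp [pK0, Chr, gInv_diagonal _ _ hE hG]
  ring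

lemma pK1_diagonal (hE : E p ≠ 0) (hG : G p ≠ 0) :
    pK1 E (fun _ => 0) G p = pd 0 E p / (2 * E p) - pd 0 G p / G p := by
  simp [pK1, Chr, gInv_diagonal _ _ hE hG]
  ring

lemma pK2_diagonal (hE : E p ≠ 0) (hG : G p ≠ 0) :
    pK2 E (fun _ => 0) G p = pd 1 E p / E p - pd 1 G p / (2 * G p) := by
  simp [pK2, Chr, gInv_diagonal _ _ hE hG]
  ring

lemma pK3_diagonal (hE : E p ≠ 0) (hG : G p ≠ 0) :
    pK3 E (fun _ => 0) G p = -pd 0 G p / (2 * E p) := by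
  simp [pK3, Chr, gInv_diagonal _ _ hE hG]
  ring

end Diagonal

def liouvilleE (A B C : ℝ → ℝ) (q : ℝ × ℝ) : ℝ := (A q.1 - B q.2) * C q.1

def liouvilleG (A B D : ℝ → ℝ) (q : ℝ × ℝ) : ℝ := (A q.1 - B q.2) * D q.2

section Liouville

variable {A B C D : ℝ → ℝ} {a' b' c' d' : ℝ} {p : ℝ × ℝ}

lemma pd_liouvilleE (hA : HasDerivAt A a' p.1) (hB : HasDerivAt B b' p.2)
    (hC : HasDerivAt C c' p.1) :
    pd 0 (liouvilleE A B C) p = a' * C p.1 + (A p.1 - B p.2) * c' ∧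
      pd 1 (liouvilleE A B C) p = -b' * C p.1 := by
  have h : HasFDerivAt (liouvilleE A B C) _ p :=
    ((hA.hasFDerivAt.comp p hasFDerivAt_fst).sub
      (hB.hasFDerivAt.comp p hasFDerivAt_snd)).mul (hC.hasFDerivAt.comp p hasFDerivAt_fst)
  rw [pd_zero_of_hasFDerivAt h, pd_one_of_hasFDerivAt h]
  constructor <;> simp <;> ring

lemma pd_liouvilleG (hA : HasDerivAt A a' p.1) (hB : HasDerivAt B b' p.2)
    (hD : HasDerivAt D d' p.2) :
    pd 0 (liouvilleG A B D) p = a' * D p.2 ∧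
      pd 1 (liouvilleG A B D) p = -b' * D p.2 + (A p.1 - B p.2) * d' := by
  have h : HasFDerivAt (liouvilleG A B D) _ p :=
    ((hA.hasFDerivAt.comp p hasFDerivAt_fst).sub
      (hB.hasFDerivAt.comp p hasFDerivAt_snd)).mul (hD.hasFDerivAt.comp p hasFDerivAt_snd)
  rw [pd_zero_of_hasFDerivAt h, pd_one_of_hasFDerivAt h]
  constructor <;> simp <;> ring

lemma projectiveCoeffs_liouville (hA : HasDerivAt A a' p.1) (hB : HasDerivAt B b' p.2)
    (hC : HasDerivAt C c' p.1) (hD : HasDerivAt D d' p.2)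
    (hAB : A p.1 ≠ B p.2) (hC0 : C p.1 ≠ 0) (hD0 : D p.2 ≠ 0) :
    let E := liouvilleE A B C
    let G := liouvilleG A B D
    pK0 E (fun _ => 0) G p = -(b' * C p.1) / (2 * (A p.1 - B p.2) * D p.2) ∧
      pK1 E (fun _ => 0) G p = c' / (2 * C p.1) - a' / (2 * (A p.1 - B p.2)) ∧
      pK2 E (fun _ => 0) G p = -b' / (2 * (A p.1 - B p.2)) - d' / (2 * D p.2) ∧
      pK3 E (fun _ => 0) G p = -(a' * D p.2) / (2 * (A p.1 - B p.2) * C p.1) := by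
  intro E G
  have hAB' : A p.1 - B p.2 ≠ 0 := sub_ne_zero.mpr hAB
  have hE : E p ≠ 0 := mul_ne_zero hAB' hC0
  have hG : G p ≠ 0 := mul_ne_zero hAB' hD0
  obtain ⟨hE0, hE1⟩ := pd_liouvilleE hA hB hC
  obtain ⟨hG0, hG1⟩ := pd_liouvilleG hA hB hD
  rw [pK0_diagonal hE hG, pK1_diagonal hE hG, pK2_diagonal hE hG, pK3_diagonal hE hG,
    hE0, hE1, hG0, hG1]
  simp only [E, G, liouvilleE, liouvilleG]
  refine ⟨?_, ?_, ?_, ?_⟩ <;> field_simp <;> ring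

lemma projectiveCoeffs_liouville_eq_reciprocal {X Y X₁ Y₁ : ℝ → ℝ} {x' y' x₁' y₁' : ℝ}
    (hX : HasDerivAt X x' p.1) (hY : HasDerivAt Y y' p.2)
    (hX₁ : HasDerivAt X₁ x₁' p.1) (hY₁ : HasDerivAt Y₁ y₁' p.2)
    (hX0 : X p.1 ≠ 0) (hY0 : Y p.2 ≠ 0) (hX₁0 : X₁ p.1 ≠ 0) (hY₁0 : Y₁ p.2 ≠ 0)
    (hXY : X p.1 ≠ Y p.2) :
    let E := liouvilleE X Y X₁
    let G := liouvilleG X Y Y₁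
    let Eb := liouvilleE X⁻¹ Y⁻¹ (X₁ / X)
    let Gb := liouvilleG X⁻¹ Y⁻¹ (Y₁ / Y)
    pK0 E (fun _ => 0) G p = pK0 Eb (fun _ => 0) Gb p ∧
      pK1 E (fun _ => 0) G p = pK1 Eb (fun _ => 0) Gb p ∧
      pK2 E (fun _ => 0) G p = pK2 Eb (fun _ => 0) Gb p ∧
      pK3 E (fun _ => 0) G p = pK3 Eb (fun _ => 0) Gb p := by
  intro E G Eb Gb
  have hXY_inv : (X p.1)⁻¹ ≠ (Y p.2)⁻¹ := inv_injective.ne hXY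
  obtain ⟨h0, h1, h2, h3⟩ := projectiveCoeffs_liouville hX hY hX₁ hY₁ hXY hX₁0 hY₁0
  obtain ⟨hb0, hb1, hb2, hb3⟩ := projectiveCoeffs_liouville (A := X⁻¹) (B := Y⁻¹)
    (C := X₁ / X) (D := Y₁ / Y) (hX.inv hX0) (hY.inv hY0) (hX₁.div hX hX0) (hY₁.div hY hY0)
    hXY_inv (div_ne_zero hX₁0 hX0) (div_ne_zero hY₁0 hY0)
  rw [h0, h1, h2, h3, hb0, hb1, hb2, hb3]
  have hXY_sub := sub_ne_zero.mpr hXY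
  have hXY_inv_sub := sub_ne_zero.mpr hXY_inv
  simp only [Pi.inv_apply, Pi.div_apply]
  refine ⟨?_, ?_, ?_, ?_⟩ <;> field_simp <;> ring

end Liouville

theorem stmt14_general
    (I₁ I₂ : Set ℝ) (hI₁open : IsOpen I₁)
    (hI₂open : IsOpen I₂)
    (X X₁ Y Y₁ : ℝ → ℝ)
    (hX : ContDiffOn ℝ (⊤ : ℕ∞) X I₁) (hX₁ : ContDiffOn ℝ (⊤ : ℕ∞) X₁ I₁)
    (hY : ContDiffOn ℝ (⊤ : ℕ∞) Y I₂) (hY₁ : ContDiffOn ℝ (⊤ : ℕ∞) Y₁ I₂)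
    (hX0 : ∀ x ∈ I₁, X x ≠ 0) (hX₁0 : ∀ x ∈ I₁, X₁ x ≠ 0)
    (hY0 : ∀ y ∈ I₂, Y y ≠ 0) (hY₁0 : ∀ y ∈ I₂, Y₁ y ≠ 0)
    (hXY : ∀ p ∈ I₁ ×ˢ I₂, X p.1 ≠ Y p.2)
    (E F G Eb Fb Gb : ℝ × ℝ → ℝ)
    (hE : ∀ p, E p = (X p.1 - Y p.2) * X₁ p.1)
    (hF : ∀ p, F p = 0)
    (hG : ∀ p, G p = (X p.1 - Y p.2) * Y₁ p.2)
    (hEb : ∀ p, Eb p = (1 / X p.1 - 1 / Y p.2) * (X₁ p.1 / X p.1))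
    (hFb : ∀ p, Fb p = 0)
    (hGb : ∀ p, Gb p = (1 / X p.1 - 1 / Y p.2) * (Y₁ p.2 / Y p.2)) :
    ∀ p ∈ I₁ ×ˢ I₂,
      pK0 E F G p = pK0 Eb Fb Gb p ∧
      pK1 E F G p = pK1 Eb Fb Gb p ∧
      pK2 E F G p = pK2 Eb Fb Gb p ∧
      pK3 E F G p = pK3 Eb Fb Gb p := by
  rintro p ⟨hx, hy⟩
  obtain rfl : E = liouvilleE X Y X₁ := funext hE
  obtain rfl : F = fun _ => 0 := funext hF
  obtain rfl : G = liouvilleG X Y Y₁ := funext hG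
  obtain rfl : Eb = liouvilleE X⁻¹ Y⁻¹ (X₁ / X) := funext fun q => by simp [hEb, liouvilleE]
  obtain rfl : Fb = fun _ => 0 := funext hFb
  obtain rfl : Gb = liouvilleG X⁻¹ Y⁻¹ (Y₁ / Y) := funext fun q => by simp [hGb, liouvilleG]
  have hx' := hI₁open.mem_nhds hx
  have hy' := hI₂open.mem_nhds hy
  exact projectiveCoeffs_liouville_eq_reciprocal
    ((hX.differentiableOn (by simp)).hasDerivAt hx')
    ((hY.differentiableOn (by simp)).hasDerivAt hy')
    ((hX₁.differentiableOn (by simp)).hasDerivAt hx')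
    ((hY₁.differentiableOn (by simp)).hasDerivAt hy')
    (hX0 _ hx) (hY0 _ hy) (hX₁0 _ hx) (hY₁0 _ hy) (hXY p ⟨hx, hy⟩)

/-- The Liouville metric `g = (X−Y)(X₁dx² + Y₁dy²)` and
`ḡ = (1/X − 1/Y)(X₁/X dx² + Y₁/Y dy²)` have identical projective connection coefficients,
hence are projectively equivalent. -/
theorem stmt14
    (I₁ I₂ : Set ℝ) (hI₁open : IsOpen I₁) (hI₁int : I₁.OrdConnected)
    (hI₂open : IsOpen I₂) (hI₂int : I₂.OrdConnected)
    (X X₁ Y Y₁ : ℝ → ℝ)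
    (hX : ContDiffOn ℝ (⊤ : ℕ∞) X I₁) (hX₁ : ContDiffOn ℝ (⊤ : ℕ∞) X₁ I₁)
    (hY : ContDiffOn ℝ (⊤ : ℕ∞) Y I₂) (hY₁ : ContDiffOn ℝ (⊤ : ℕ∞) Y₁ I₂)
    (hX0 : ∀ x ∈ I₁, X x ≠ 0) (hX₁0 : ∀ x ∈ I₁, X₁ x ≠ 0)
    (hY0 : ∀ y ∈ I₂, Y y ≠ 0) (hY₁0 : ∀ y ∈ I₂, Y₁ y ≠ 0)
    (hXY : ∀ p ∈ I₁ ×ˢ I₂, X p.1 ≠ Y p.2)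
    (E F G Eb Fb Gb : ℝ × ℝ → ℝ)
    (hE : ∀ p, E p = (X p.1 - Y p.2) * X₁ p.1)
    (hF : ∀ p, F p = 0)
    (hG : ∀ p, G p = (X p.1 - Y p.2) * Y₁ p.2)
    (hEb : ∀ p, Eb p = (1 / X p.1 - 1 / Y p.2) * (X₁ p.1 / X p.1))
    (hFb : ∀ p, Fb p = 0)
    (hGb : ∀ p, Gb p = (1 / X p.1 - 1 / Y p.2) * (Y₁ p.2 / Y p.2)) :
    ∀ p ∈ I₁ ×ˢ I₂,
      pK0 E F G p = pK0 Eb Fb Gb p ∧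
      pK1 E F G p = pK1 Eb Fb Gb p ∧
      pK2 E F G p = pK2 Eb Fb Gb p ∧
      pK3 E F G p = pK3 Eb Fb Gb p :=
  stmt14_general I₁ I₂ hI₁open hI₂open X X₁ Y Y₁ hX hX₁ hY hY₁ hX0 hX₁0 hY0 hY₁0 hXY E F G Eb Fb Gb
    hE hF hG hEb hFb hGb
end
end
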